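/- arXiv:2208.13479 — 6 statements merged into one kernel-verified Lean document; each statement's English description precedes it below -/
import Mathlib

section
/- Let k be a positive integer, n ∈ {1,…,2^{k−1}} and m ∈ ℕ. For every x with (n−1)/2^{k−1} ≤ x ≤ n/2^{k−1}, the first integral of the Taylor wavelet satisfies ∫₀^x ψ_{nm}(τ) dτ = (2^{(m+1/2)(k−1)} √(2m+1) / (m+1)) · (x − (n−1)/2^{k−1})^{m+1}. -/
open Real intervalIntegral
open MeasureTheory Set

/-!
On its support `[a, b)`, `a = (n - 1)/2^(k-1)`, the wavelet is `2^((k-1)/2) √(2m+1) 2^((k-1)m) (τ - a)^m`,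
and `a ≥ 0`, so for `a ≤ x ≤ b` the integral from `0` is the integral of this monomial from `a`, namely
`(x - a)^(m+1)/(m+1)` times the constant; the powers of two combine to `2^((m+1/2)(k-1))`.
-/

theorem intervalIntegral_ite_Ico_eq {E : Type*} [NormedAddCommGroup E] [NormedSpace ℝ E]
    {μ : Measure ℝ} [NullSingletonClass μ] {a b x : ℝ} (g : ℝ → E)
    (ha : 0 ≤ a) (hax : a ≤ x) (hxb : x ≤ b) :
    ∫ τ in (0 : ℝ)..x, (if a ≤ τ ∧ τ < b then g τ else 0) ∂μ = ∫ τ in a..x, g τ ∂μ := by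
  have hsupp : (Ioc 0 x ∩ Ico a b : Set ℝ) =ᵐ[μ] Ioc a x := by
    filter_upwards [μ.ae_ne a, μ.ae_ne b] with τ hτa hτb
    rw [eq_iff_iff]
    constructor
    · rintro ⟨⟨-, hτx⟩, haτ, -⟩
      exact ⟨lt_of_le_of_ne haτ hτa.symm, hτx⟩
    · rintro ⟨haτ, hτx⟩
      exact ⟨⟨by linarith, hτx⟩, haτ.le, lt_of_le_of_ne (hτx.trans hxb) hτb⟩
  simp only [integral_of_le (ha.trans hax), integral_of_le hax, ← mem_Ico, ← indicator_apply]
  rw [setIntegral_indicator measurableSet_Ico, setIntegral_congr_set hsupp]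

theorem integral_sub_pow (a x : ℝ) (m : ℕ) :
    ∫ τ in a..x, (τ - a) ^ m = (x - a) ^ (m + 1) / (m + 1) := by
  simp [integral_comp_sub_right fun τ => τ ^ m, integral_pow]

theorem rpow_div_two_mul_rpow_pow {b : ℝ} (hb : 0 < b) (s : ℝ) (m : ℕ) :
    b ^ (s / 2) * (b ^ s) ^ m = b ^ ((m + 1 / 2) * s) := by
  rw [← Real.rpow_natCast, ← Real.rpow_mul hb.le, ← Real.rpow_add hb]
  ring_nf

theorem taylor_wavelet_first_integral_middle_general
    (k n m : ℕ) (hk : 0 < k) (hn1 : 1 ≤ n)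
    (x : ℝ) (hx1 : ((n : ℝ) - 1) / 2 ^ (k - 1) ≤ x) (hx2 : x ≤ (n : ℝ) / 2 ^ (k - 1)) :
    ∫ τ in (0 : ℝ)..x,
        (if ((n : ℝ) - 1) / 2 ^ (k - 1) ≤ τ ∧ τ < (n : ℝ) / 2 ^ (k - 1) then
          (2 : ℝ) ^ (((k : ℝ) - 1) / 2) * Real.sqrt (2 * m + 1) *
            ((2 : ℝ) ^ (k - 1) * τ - n + 1) ^ m
        else 0)
      = (2 : ℝ) ^ (((m : ℝ) + 1 / 2) * ((k : ℝ) - 1)) * Real.sqrt (2 * m + 1) / ((m : ℝ) + 1) *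
          (x - ((n : ℝ) - 1) / 2 ^ (k - 1)) ^ (m + 1) := by
  set K : ℝ := 2 ^ (k - 1) with hK_def
  set a : ℝ := ((n : ℝ) - 1) / K with ha_def
  have hK : K = 2 ^ ((k : ℝ) - 1) := by
    rw [hK_def, ← Real.rpow_natCast, Nat.cast_sub hk, Nat.cast_one]
  have ha : 0 ≤ a := div_nonneg (by simpa using hn1) (by positivity)
  have hshift (τ : ℝ) : K * τ - n + 1 = K * (τ - a) := by
    have hK0 : K ≠ 0 := by positivity
    rw [ha_def]; field_simp; ring
  simp_rw [hshift, mul_pow, ← mul_assoc]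
  rw [intervalIntegral_ite_Ico_eq _ ha hx1 hx2, intervalIntegral.integral_const_mul,
    integral_sub_pow, hK, ← rpow_div_two_mul_rpow_pow two_pos]
  ring

/-- **First integral of the Taylor wavelet, middle case (Eq. (2.9)).**
For `x` in the support interval `[(n−1)/2^{k−1}, n/2^{k−1}]`,
`∫₀^x ψ_{nm}(τ) dτ = (2^{(m+1/2)(k−1)} √(2m+1)/(m+1)) (x − (n−1)/2^{k−1})^{m+1}`. -/
theorem taylor_wavelet_first_integral_middle
    (k n m : ℕ) (hk : 0 < k) (hn1 : 1 ≤ n) (hn2 : n ≤ 2 ^ (k - 1))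
    (x : ℝ) (hx1 : ((n : ℝ) - 1) / 2 ^ (k - 1) ≤ x) (hx2 : x ≤ (n : ℝ) / 2 ^ (k - 1)) :
    ∫ τ in (0 : ℝ)..x,
        (if ((n : ℝ) - 1) / 2 ^ (k - 1) ≤ τ ∧ τ < (n : ℝ) / 2 ^ (k - 1) then
          (2 : ℝ) ^ (((k : ℝ) - 1) / 2) * Real.sqrt (2 * m + 1) *
            ((2 : ℝ) ^ (k - 1) * τ - n + 1) ^ m
        else 0)
      = (2 : ℝ) ^ (((m : ℝ) + 1 / 2) * ((k : ℝ) - 1)) * Real.sqrt (2 * m + 1) / ((m : ℝ) + 1) *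
          (x - ((n : ℝ) - 1) / 2 ^ (k - 1)) ^ (m + 1) :=
  taylor_wavelet_first_integral_middle_general k n m hk hn1 x hx1 hx2
end

section
/- Let k be a positive integer, n ∈ {1,…,2^{k−1}} and m ∈ ℕ. For every x with (n−1)/2^{k−1} ≤ x ≤ n/2^{k−1}, the second integral of the Taylor wavelet satisfies ∫₀^x ∫₀^u ψ_{nm}(τ) dτ du = (2^{(m+1/2)(k−1)} √(2m+1) / ((m+1)(m+2))) · (x − (n−1)/2^{k−1})^{m+2}. -/
open Real intervalIntegral MeasureTheory

lemma ae_ne_real (y : ℝ) : ∀ᵐ τ : ℝ, τ ≠ y := by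
  rw [MeasureTheory.ae_iff]
  simp

lemma taylor_aux (a b x c : ℝ) (m : ℕ) (h0a : 0 ≤ a) (hax : a ≤ x) (hxb : x ≤ b) :
    ∫ u in (0 : ℝ)..x, ∫ τ in (0 : ℝ)..u,
        (if a ≤ τ ∧ τ < b then c * (τ - a) ^ m else 0)
      = c / (((m : ℝ) + 1) * ((m : ℝ) + 2)) * (x - a) ^ (m + 2) := by
  set f : ℝ → ℝ := fun τ => if a ≤ τ ∧ τ < b then c * (τ - a) ^ m else 0 with hf
  have hm1 : ((m : ℝ) + 1) ≠ 0 := by positivity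
  have hm2 : ((m : ℝ) + 2) ≠ 0 := by positivity
  have hcont : Continuous (fun τ : ℝ => c * (τ - a) ^ m) := by fun_prop
  have hind : f = (Set.Ico a b).indicator (fun τ => c * (τ - a) ^ m) := by
    funext τ; simp [hf, Set.indicator_apply, Set.mem_Ico]
  have hfint : ∀ p q : ℝ, IntervalIntegrable f volume p q := by
    intro p q
    rw [hind, intervalIntegrable_iff]
    have := (hcont.intervalIntegrable (μ := volume) p q)
    rw [intervalIntegrable_iff] at this
    exact this.indicator measurableSet_Ico
  have inner_zero : ∀ u : ℝ, 0 ≤ u → u ≤ a → (∫ τ in (0:ℝ)..u, f τ) = 0 := by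
    intro u h0 hua
    have h : ∀ᵐ τ : ℝ, τ ∈ Set.uIoc 0 u → f τ = (fun _ : ℝ => (0:ℝ)) τ := by
      filter_upwards [ae_ne_real a] with τ hτ hmem
      rw [Set.uIoc_of_le h0] at hmem
      have hc : ¬ (a ≤ τ ∧ τ < b) := by
        rintro ⟨h1, _⟩
        exact hτ (le_antisymm (hmem.2.trans hua) h1)
      simp [hf, hc]
    rw [intervalIntegral.integral_congr_ae h, intervalIntegral.integral_zero]
  have inner_formula : ∀ u : ℝ, a ≤ u → u ≤ b →
      (∫ τ in (0:ℝ)..u, f τ) = c / ((m : ℝ) + 1) * (u - a) ^ (m + 1) := by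
    intro u hau hub
    rw [← intervalIntegral.integral_add_adjacent_intervals (hfint 0 a) (hfint a u)]
    rw [inner_zero a h0a le_rfl, zero_add]
    have h1 : (∫ τ in a..u, f τ) = ∫ τ in a..u, c * (τ - a) ^ m := by
      apply intervalIntegral.integral_congr_ae
      filter_upwards [ae_ne_real b] with τ hτ hmem
      rw [Set.uIoc_of_le hau] at hmem
      have hc : a ≤ τ ∧ τ < b := ⟨hmem.1.le, lt_of_le_of_ne (hmem.2.trans hub) hτ⟩
      simp [hf, hc]
    rw [h1, intervalIntegral.integral_const_mul,
      intervalIntegral.integral_comp_sub_right (fun y => y ^ m) a]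
    simp only [sub_self]
    rw [integral_pow, zero_pow (by omega : m + 1 ≠ 0), sub_zero]
    push_cast
    ring
  have h0x : (0:ℝ) ≤ x := h0a.trans hax
  have key : (∫ u in (0:ℝ)..x, ∫ τ in (0:ℝ)..u, f τ)
      = ∫ u in (0:ℝ)..x, c / ((m : ℝ) + 1) * (max (u - a) 0) ^ (m + 1) := by
    apply intervalIntegral.integral_congr
    intro u hu
    rw [Set.uIcc_of_le h0x] at hu
    dsimp only
    rcases le_total u a with h | h
    · rw [inner_zero u hu.1 h, max_eq_right (by linarith), zero_pow (Nat.succ_ne_zero m)]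
      ring
    · rw [inner_formula u h (hu.2.trans hxb), max_eq_left (by linarith)]
  rw [key]
  have hGcont : Continuous (fun u : ℝ => c / ((m : ℝ) + 1) * (max (u - a) 0) ^ (m + 1)) := by
    fun_prop
  rw [← intervalIntegral.integral_add_adjacent_intervals (b := a)
    (hGcont.intervalIntegrable 0 a) (hGcont.intervalIntegrable a x)]
  have hz : (∫ u in (0:ℝ)..a, c / ((m : ℝ) + 1) * (max (u - a) 0) ^ (m + 1)) = 0 := by
    rw [intervalIntegral.integral_congr (g := fun _ => (0:ℝ))]
    · exact intervalIntegral.integral_zero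
    · intro u hu
      rw [Set.uIcc_of_le h0a] at hu
      dsimp only
      rw [max_eq_right (by linarith [hu.2]), zero_pow (Nat.succ_ne_zero m)]
      ring
  rw [hz, zero_add]
  rw [intervalIntegral.integral_congr
    (g := fun u => c / ((m : ℝ) + 1) * (u - a) ^ (m + 1))
    (by intro u hu; rw [Set.uIcc_of_le hax] at hu
        dsimp only
        rw [max_eq_left (by linarith [hu.1])])]
  rw [intervalIntegral.integral_const_mul,
    intervalIntegral.integral_comp_sub_right (fun y => y ^ (m + 1)) a]
  simp only [sub_self]
  rw [integral_pow, zero_pow (by omega : m + 1 + 1 ≠ 0), sub_zero]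
  push_cast
  rw [← div_div]
  ring

/-- **Second integral of the Taylor wavelet, middle case (Eq. (2.10)).**
For `x` in the support interval `[(n−1)/2^{k−1}, n/2^{k−1}]`,
`∫₀^x ∫₀^u ψ_{nm}(τ) dτ du
  = (2^{(m+1/2)(k−1)} √(2m+1)/((m+1)(m+2))) (x − (n−1)/2^{k−1})^{m+2}`. -/
theorem taylor_wavelet_second_integral_middle
    (k n m : ℕ) (hk : 0 < k) (hn1 : 1 ≤ n) (hn2 : n ≤ 2 ^ (k - 1))
    (x : ℝ) (hx1 : ((n : ℝ) - 1) / 2 ^ (k - 1) ≤ x) (hx2 : x ≤ (n : ℝ) / 2 ^ (k - 1)) :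
    ∫ u in (0 : ℝ)..x, ∫ τ in (0 : ℝ)..u,
        (if ((n : ℝ) - 1) / 2 ^ (k - 1) ≤ τ ∧ τ < (n : ℝ) / 2 ^ (k - 1) then
          (2 : ℝ) ^ (((k : ℝ) - 1) / 2) * Real.sqrt (2 * m + 1) *
            ((2 : ℝ) ^ (k - 1) * τ - n + 1) ^ m
        else 0)
      = (2 : ℝ) ^ (((m : ℝ) + 1 / 2) * ((k : ℝ) - 1)) * Real.sqrt (2 * m + 1) /
          (((m : ℝ) + 1) * ((m : ℝ) + 2)) * (x - ((n : ℝ) - 1) / 2 ^ (k - 1)) ^ (m + 2) := by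
  have hd0 : (0:ℝ) < 2 ^ (k - 1) := by positivity
  have hn1' : (1:ℝ) ≤ (n:ℝ) := by exact_mod_cast hn1
  have ha0 : 0 ≤ ((n:ℝ) - 1) / 2 ^ (k - 1) := div_nonneg (by linarith) hd0.le
  have hrw : ∀ τ : ℝ,
      (2 : ℝ) ^ (((k : ℝ) - 1) / 2) * Real.sqrt (2 * m + 1) *
          ((2 : ℝ) ^ (k - 1) * τ - n + 1) ^ m
      = ((2 : ℝ) ^ (((k : ℝ) - 1) / 2) * Real.sqrt (2 * m + 1) * ((2 : ℝ) ^ (k - 1)) ^ m) *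
          (τ - ((n : ℝ) - 1) / 2 ^ (k - 1)) ^ m := by
    intro τ
    have h1 : (2:ℝ) ^ (k - 1) * τ - n + 1
        = (2:ℝ) ^ (k - 1) * (τ - ((n:ℝ) - 1) / 2 ^ (k - 1)) := by
      field_simp
      ring
    rw [h1, mul_pow]
    ring
  simp_rw [hrw]
  rw [taylor_aux _ _ _ _ m ha0 hx1 hx2]
  have hcast : ((k - 1 : ℕ) : ℝ) = (k:ℝ) - 1 := by
    push_cast [Nat.cast_sub hk]
    ring
  have h2 : (((2:ℝ) ^ (k - 1)) ^ m : ℝ) = (2:ℝ) ^ (((k:ℝ) - 1) * m) := by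
    rw [← Real.rpow_natCast (2:ℝ) (k - 1), ← Real.rpow_natCast ((2:ℝ) ^ (((k - 1 : ℕ)):ℝ)) m,
      ← Real.rpow_mul (by norm_num), hcast]
  have hconst : (2 : ℝ) ^ (((k : ℝ) - 1) / 2) * Real.sqrt (2 * m + 1) * ((2 : ℝ) ^ (k - 1)) ^ m
      = (2 : ℝ) ^ (((m : ℝ) + 1 / 2) * ((k : ℝ) - 1)) * Real.sqrt (2 * m + 1) := by
    rw [h2, mul_right_comm, ← Real.rpow_add (by norm_num : (0:ℝ) < 2)]
    congr 2
    ring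
  rw [hconst]
end

section
/- Let k be a positive integer, n ∈ {1,…,2^{k−1}} and let m ≥ 2 be a natural number. For every x with (n−1)/2^{k−1} ≤ x ≤ n/2^{k−1}, writing θ = 2^k x − 2n + 1, the first integral of the Chebyshev wavelet satisfies ∫₀^x φ_{nm}(τ) dτ = γ_m 2^{−(k−1)/2 − 2} [ T_{m+1}(θ)/(m+1) − T_{m−1}(θ)/(m−1) + μ_m ], where μ_m = (−1)^{m−1}/(m−1) − (−1)^{m+1}/(m+1). -/
open Real intervalIntegral

/-- Normalizing constant of the Chebyshev wavelets: `γ 0 = √(2/π)`, `γ m = 2/√π` for `m ≥ 1`. -/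
noncomputable def chebGamma (m : ℕ) : ℝ :=
  if m = 0 then Real.sqrt (2 / Real.pi) else 2 / Real.sqrt Real.pi

/-!
On `[0, x]` the wavelet vanishes left of `a = (n - 1) / 2^(k-1)`, so the integral is
`∫_a^x γ_m 2^((k-1)/2) T_m(2^k τ - 2n + 1) dτ`. From `T_j' = j U_(j-1)` and `U_m - U_(m-2) = 2 T_m`,
`(T_(m+1)/(m+1) - T_(m-1)/(m-1)) / 2` is a primitive of `T_m`; the affine change of variables
contributes the factor `2^(-k)`, and the lower limit `a` is sent to `θ = -1`, where
`T_j(-1) = (-1)^j` produces the constant `μ_m`.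
-/

open MeasureTheory Polynomial Polynomial.Chebyshev

namespace Polynomial.Chebyshev

variable {R : Type*} [CommRing R]

theorem mul_derivative_T_add_one_sub_mul_derivative_T_sub_one (n : ℤ) :
    ((n : R[X]) - 1) * derivative (T R (n + 1)) - ((n : R[X]) + 1) * derivative (T R (n - 1))
      = 2 * ((n : R[X]) + 1) * ((n : R[X]) - 1) * T R n := by
  have h := two_mul_T_eq_U_sub_U R (n - 2)
  rw [T_derivative_eq_U, T_derivative_eq_U]
  linear_combination (norm := (push_cast; ring_nf)) (-((n : R[X]) + 1) * ((n : R[X]) - 1)) * h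

theorem hasDerivAt_T_primitive {m : ℤ} (hm_add : (m : ℝ) + 1 ≠ 0) (hm_sub : (m : ℝ) - 1 ≠ 0)
    (θ : ℝ) :
    HasDerivAt
      (fun θ => ((T ℝ (m + 1)).eval θ / (m + 1) - (T ℝ (m - 1)).eval θ / (m - 1)) / 2)
      ((T ℝ m).eval θ) θ := by
  have h := congrArg (eval θ) (mul_derivative_T_add_one_sub_mul_derivative_T_sub_one (R := ℝ) m)
  simp only [eval_sub, eval_mul, eval_add, eval_intCast, eval_one, eval_ofNat] at h
  refine ((((T ℝ (m + 1)).hasDerivAt θ).div_const _).sub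
    (((T ℝ (m - 1)).hasDerivAt θ).div_const _)).div_const 2 |>.congr_deriv ?_
  field_simp
  linear_combination h

end Polynomial.Chebyshev

namespace intervalIntegral

variable {E : Type*} [NormedAddCommGroup E] [NormedSpace ℝ E]

theorem integral_ite_Ico_eq {g : ℝ → E} {a b c x : ℝ} (hca : c ≤ a) (hax : a ≤ x) (hxb : x ≤ b) :
    ∫ τ in c..x, (if a ≤ τ ∧ τ < b then g τ else 0) = ∫ τ in a..x, g τ := by
  have hae : ∀ᵐ τ, τ ∈ Set.uIoc c x →
      (if a ≤ τ ∧ τ < b then g τ else 0) = Set.indicator (Set.Ioi a) g τ := by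
    filter_upwards [volume.ae_ne a, volume.ae_ne b] with τ hτa hτb hτ
    rw [Set.uIoc_of_le (hca.trans hax)] at hτ
    by_cases h : a < τ
    · have : τ < b := lt_of_le_of_ne (hτ.2.trans hxb) hτb
      simp [h, h.le, this]
    · have : ¬ a ≤ τ := fun h' => h (lt_of_le_of_ne h' (Ne.symm hτa))
      simp [h, this]
  rw [integral_congr_ae hae, integral_of_le (hca.trans hax), integral_of_le hax,
    setIntegral_indicator measurableSet_Ioi, Set.Ioc_inter_Ioi, max_eq_right hca]

theorem integral_comp_mul_add_of_hasDerivAt [CompleteSpace E] {f F : ℝ → E}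
    (hF : ∀ θ, HasDerivAt F (f θ) θ) {s : ℝ} (hs : s ≠ 0) {d a b : ℝ}
    (hf : IntervalIntegrable f volume (s * a + d) (s * b + d)) :
    ∫ τ in a..b, f (s * τ + d) = s⁻¹ • (F (s * b + d) - F (s * a + d)) := by
  rw [integral_comp_mul_add _ hs, integral_eq_sub_of_hasDerivAt (fun θ _ => hF θ) hf]

end intervalIntegral

theorem two_pow_mul_div_two_pow_pred {k : ℕ} (hk : 0 < k) (y : ℝ) :
    (2 : ℝ) ^ k * (y / 2 ^ (k - 1)) = 2 * y := by
  rw [← Nat.sub_add_cancel hk, pow_succ, Nat.add_sub_cancel]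
  field_simp

theorem chebyshev_wavelet_first_integral_middle_general
    (k n m : ℕ) (hk : 0 < k) (hn1 : 1 ≤ n) (hm : 2 ≤ m)
    (x : ℝ) (hx1 : ((n : ℝ) - 1) / 2 ^ (k - 1) ≤ x) (hx2 : x ≤ (n : ℝ) / 2 ^ (k - 1)) :
    ∫ τ in (0 : ℝ)..x,
        (if ((n : ℝ) - 1) / 2 ^ (k - 1) ≤ τ ∧ τ < (n : ℝ) / 2 ^ (k - 1) then
          chebGamma m * (2 : ℝ) ^ (((k : ℝ) - 1) / 2) *
            (Polynomial.Chebyshev.T ℝ (m : ℤ)).eval ((2 : ℝ) ^ k * τ - 2 * n + 1)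
        else 0)
      = chebGamma m * (2 : ℝ) ^ (-((k : ℝ) - 1) / 2 - 2) *
          ((Polynomial.Chebyshev.T ℝ ((m : ℤ) + 1)).eval ((2 : ℝ) ^ k * x - 2 * n + 1) /
              ((m : ℝ) + 1)
            - (Polynomial.Chebyshev.T ℝ ((m : ℤ) - 1)).eval ((2 : ℝ) ^ k * x - 2 * n + 1) /
              ((m : ℝ) - 1)
            + ((-1 : ℝ) ^ (m - 1) / ((m : ℝ) - 1) - (-1 : ℝ) ^ (m + 1) / ((m : ℝ) + 1))) := by
  have hm_add : ((m : ℤ) : ℝ) + 1 ≠ 0 := by positivity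
  have hm_sub : ((m : ℤ) : ℝ) - 1 ≠ 0 := by
    have : (2 : ℝ) ≤ m := by exact_mod_cast hm
    push_cast; linarith
  have ha : 0 ≤ ((n : ℝ) - 1) / 2 ^ (k - 1) :=
    div_nonneg (sub_nonneg.2 (by exact_mod_cast hn1)) (by positivity)
  have hθa : (2 : ℝ) ^ k * (((n : ℝ) - 1) / 2 ^ (k - 1)) + (1 - 2 * n) = -1 := by
    rw [two_pow_mul_div_two_pow_pred hk]
    ring
  have hsign_add : ((((m : ℤ) + 1).negOnePow : ℤ) : ℝ) = (-1) ^ (m + 1) := by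
    exact_mod_cast Int.cast_negOnePow_natCast ℝ (m + 1)
  have hsign_sub : ((((m : ℤ) - 1).negOnePow : ℤ) : ℝ) = (-1) ^ (m - 1) := by
    rw [← Nat.cast_pred (by omega)]
    exact Int.cast_negOnePow_natCast ℝ (m - 1)
  have hscale : (2 : ℝ) ^ (((k : ℝ) - 1) / 2) = 2 ^ (-((k : ℝ) - 1) / 2 - 2) * (2 * 2 ^ k) := by
    rw [← rpow_natCast, ← rpow_one_add' (by norm_num) (by positivity), ← rpow_add (by norm_num)]
    ring_nf
  simp_rw [show ∀ τ : ℝ, (2 : ℝ) ^ k * τ - 2 * n + 1 = 2 ^ k * τ + (1 - 2 * n) from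
    fun τ => by ring]
  rw [integral_ite_Ico_eq ha hx1 hx2, intervalIntegral.integral_const_mul,
    integral_comp_mul_add_of_hasDerivAt (hasDerivAt_T_primitive hm_add hm_sub) (by positivity)
      ((T ℝ m).continuous.intervalIntegrable _ _), hθa, T_eval_neg_one, T_eval_neg_one,
    hsign_add, hsign_sub, hscale, smul_eq_mul]
  push_cast
  field_simp
  ring

/-- **First integral of the Chebyshev wavelet for `m ≥ 2`, middle case (Eq. (2.14)).**
For `x` in the support interval, with `θ = 2^k x − 2n + 1`,
`∫₀^x φ_{nm}(τ) dτ = γ_m 2^{−(k−1)/2−2} [T_{m+1}(θ)/(m+1) − T_{m−1}(θ)/(m−1) + μ_m]`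
where `μ_m = (−1)^{m−1}/(m−1) − (−1)^{m+1}/(m+1)`. -/
theorem chebyshev_wavelet_first_integral_middle
    (k n m : ℕ) (hk : 0 < k) (hn1 : 1 ≤ n) (hn2 : n ≤ 2 ^ (k - 1)) (hm : 2 ≤ m)
    (x : ℝ) (hx1 : ((n : ℝ) - 1) / 2 ^ (k - 1) ≤ x) (hx2 : x ≤ (n : ℝ) / 2 ^ (k - 1)) :
    ∫ τ in (0 : ℝ)..x,
        (if ((n : ℝ) - 1) / 2 ^ (k - 1) ≤ τ ∧ τ < (n : ℝ) / 2 ^ (k - 1) then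
          chebGamma m * (2 : ℝ) ^ (((k : ℝ) - 1) / 2) *
            (Polynomial.Chebyshev.T ℝ (m : ℤ)).eval ((2 : ℝ) ^ k * τ - 2 * n + 1)
        else 0)
      = chebGamma m * (2 : ℝ) ^ (-((k : ℝ) - 1) / 2 - 2) *
          ((Polynomial.Chebyshev.T ℝ ((m : ℤ) + 1)).eval ((2 : ℝ) ^ k * x - 2 * n + 1) /
              ((m : ℝ) + 1)
            - (Polynomial.Chebyshev.T ℝ ((m : ℤ) - 1)).eval ((2 : ℝ) ^ k * x - 2 * n + 1) /
              ((m : ℝ) - 1)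
            + ((-1 : ℝ) ^ (m - 1) / ((m : ℝ) - 1) - (-1 : ℝ) ^ (m + 1) / ((m : ℝ) + 1))) :=
  chebyshev_wavelet_first_integral_middle_general k n m hk hn1 hm x hx1 hx2
end

section
/- Let k be a positive integer, n ∈ {1,…,2^{k−1}} and let m ≥ 2 be a natural number. For every x with n/2^{k−1} ≤ x ≤ 1, the first integral of the Chebyshev wavelet is constant: ∫₀^x φ_{nm}(τ) dτ = γ_m 2^{−(k−1)/2 − 2} ρ_m, where ρ_m = (1 − (−1)^{m+1})/(m+1) − (1 − (−1)^{m−1})/(m−1). -/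
open Real intervalIntegral

/-!
On its support `[(n-1)/2^{k-1}, n/2^{k-1})` the wavelet is `γ_m 2^{(k-1)/2} T_m(2^k τ - 2n + 1)`,
and the affine substitution `u = 2^k τ - 2n + 1` maps the support onto `[-1, 1]`. Beyond the
support the first integral is therefore `γ_m 2^{(k-1)/2} 2^{-k} ∫_{-1}^1 T_m`, and for `m ≠ ±1`
the integral of `T_m` is read off the antiderivative `T_{m+1}/(2(m+1)) - T_{m-1}/(2(m-1))`.
-/

open Polynomial MeasureTheory Set

namespace Polynomial.Chebyshev

lemma two_mul_T_eq_U_sub_U_sub_two (R : Type*) [CommRing R] (m : ℤ) :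
    2 * T R m = U R m - U R (m - 2) := by
  simpa using two_mul_T_eq_U_sub_U R (m - 2)

variable {m : ℤ}

/-- Because `T_j' = j U_{j-1}` and `2 T_m = U_m - U_{m-2}`. -/
lemma hasDerivAt_T_antiderivative (hm₁ : (m : ℝ) + 1 ≠ 0) (hm₂ : (m : ℝ) - 1 ≠ 0) (u : ℝ) :
    HasDerivAt (fun u => (T ℝ (m + 1)).eval u / (2 * ((m : ℝ) + 1))
        - (T ℝ (m - 1)).eval u / (2 * ((m : ℝ) - 1)))
      ((T ℝ m).eval u) u := by
  refine ((((T ℝ (m + 1)).hasDerivAt u).div_const _).sub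
    (((T ℝ (m - 1)).hasDerivAt u).div_const _)).congr_deriv ?_
  have hU := congrArg (eval u) (two_mul_T_eq_U_sub_U_sub_two ℝ m)
  simp only [T_derivative_eq_U, eval_mul, eval_sub, eval_intCast, eval_ofNat,
    add_sub_cancel_right, show m - 1 - 1 = m - 2 by ring] at hU ⊢
  push_cast
  field_simp
  linear_combination -hU

lemma integral_T_eval (hm₁ : (m : ℝ) + 1 ≠ 0) (hm₂ : (m : ℝ) - 1 ≠ 0) :
    ∫ u in (-1 : ℝ)..1, (T ℝ m).eval u
      = (1 - ((m + 1).negOnePow : ℝ)) / (2 * ((m : ℝ) + 1))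
          - (1 - ((m - 1).negOnePow : ℝ)) / (2 * ((m : ℝ) - 1)) := by
  rw [integral_eq_sub_of_hasDerivAt (fun u _ => hasDerivAt_T_antiderivative hm₁ hm₂ u)
    ((T ℝ m).continuous.intervalIntegrable _ _)]
  simp only [T_eval_one, T_eval_neg_one]
  ring

end Polynomial.Chebyshev

lemma intervalIntegral_indicator_Ico {E : Type*} [NormedAddCommGroup E] [NormedSpace ℝ E]
    {f : ℝ → E} {a b c d : ℝ} (hca : c ≤ a) (hab : a ≤ b) (hbd : b ≤ d) :
    ∫ τ in c..d, (Ico a b).indicator f τ = ∫ τ in a..b, f τ := by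
  have hIoc : (Ico a b).indicator f =ᵐ[volume] (Ioc a b).indicator f :=
    indicator_ae_eq_of_ae_eq_set Ico_ae_eq_Ioc
  rw [integral_congr_ae (hIoc.mono fun _ h _ => h), integral_of_le (hca.trans (hab.trans hbd)),
    MeasureTheory.integral_indicator measurableSet_Ioc, Measure.restrict_restrict measurableSet_Ioc,
    inter_eq_left.mpr (Ioc_subset_Ioc hca hbd), integral_of_le hab]

lemma two_rpow_half_div_two_pow_succ (k : ℕ) :
    (2 : ℝ) ^ (((k : ℝ) - 1) / 2) / 2 ^ (k + 1) = 2 ^ (-((k : ℝ) - 1) / 2 - 2) := by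
  rw [show -((k : ℝ) - 1) / 2 - 2 = ((k : ℝ) - 1) / 2 - ((k + 1 : ℕ) : ℝ) by push_cast; ring,
    rpow_sub two_pos, rpow_natCast]

theorem chebyshev_wavelet_first_integral_tail_general
    (k n m : ℕ) (hk : 0 < k) (hn1 : 1 ≤ n) (hm : 2 ≤ m)
    (x : ℝ) (hx1 : (n : ℝ) / 2 ^ (k - 1) ≤ x) :
    ∫ τ in (0 : ℝ)..x,
        (if ((n : ℝ) - 1) / 2 ^ (k - 1) ≤ τ ∧ τ < (n : ℝ) / 2 ^ (k - 1) then
          chebGamma m * (2 : ℝ) ^ (((k : ℝ) - 1) / 2) *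
            (Polynomial.Chebyshev.T ℝ (m : ℤ)).eval ((2 : ℝ) ^ k * τ - 2 * n + 1)
        else 0)
      = chebGamma m * (2 : ℝ) ^ (-((k : ℝ) - 1) / 2 - 2) *
          ((1 - (-1 : ℝ) ^ (m + 1)) / ((m : ℝ) + 1) - (1 - (-1 : ℝ) ^ (m - 1)) / ((m : ℝ) - 1)) := by
  set a : ℝ := ((n : ℝ) - 1) / 2 ^ (k - 1) with ha_def
  set b : ℝ := (n : ℝ) / 2 ^ (k - 1) with hb_def
  have hn : (1 : ℝ) ≤ n := by exact_mod_cast hn1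
  have hm_real : (2 : ℝ) ≤ m := by exact_mod_cast hm
  have h0a : 0 ≤ a := div_nonneg (by linarith) (by positivity)
  have hab : a ≤ b := by rw [ha_def, hb_def]; gcongr; linarith
  have h2k : (2 : ℝ) ^ k = 2 * 2 ^ (k - 1) := by rw [← pow_succ']; congr 1; omega
  have ha : (2 : ℝ) ^ k * a + (1 - 2 * n) = -1 := by rw [ha_def, h2k]; field_simp; ring
  have hb : (2 : ℝ) ^ k * b + (1 - 2 * n) = 1 := by rw [hb_def, h2k]; field_simp; ring
  have hm_succ : (m : ℤ) + 1 = ((m + 1 : ℕ) : ℤ) := by push_cast; rfl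
  have hm_pred : (m : ℤ) - 1 = ((m - 1 : ℕ) : ℤ) := by omega
  simp_rw [← mem_Ico (a := a),
    show ∀ τ : ℝ, (2 : ℝ) ^ k * τ - 2 * n + 1 = 2 ^ k * τ + (1 - 2 * n) from fun τ => by ring,
    ← indicator_apply (Ico a b) (fun τ =>
      chebGamma m * 2 ^ (((k : ℝ) - 1) / 2) * (Chebyshev.T ℝ m).eval (2 ^ k * τ + (1 - 2 * n)))]
  rw [intervalIntegral_indicator_Ico h0a hab hx1, intervalIntegral.integral_const_mul,
    integral_comp_mul_add (fun u => (Chebyshev.T ℝ m).eval u) (by positivity), ha, hb,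
    Chebyshev.integral_T_eval (by push_cast; linarith) (by push_cast; linarith), hm_succ, hm_pred,
    Int.cast_negOnePow_natCast, Int.cast_negOnePow_natCast, Int.cast_natCast, smul_eq_mul,
    ← two_rpow_half_div_two_pow_succ, pow_succ (2 : ℝ) k]
  field_simp

/-- **First integral of the Chebyshev wavelet for `m ≥ 2` beyond the support (Eq. (2.14)).**
For `n/2^{k−1} ≤ x ≤ 1`,
`∫₀^x φ_{nm}(τ) dτ = γ_m 2^{−(k−1)/2−2} ρ_m`
where `ρ_m = (1 − (−1)^{m+1})/(m+1) − (1 − (−1)^{m−1})/(m−1)`. -/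
theorem chebyshev_wavelet_first_integral_tail
    (k n m : ℕ) (hk : 0 < k) (hn1 : 1 ≤ n) (hn2 : n ≤ 2 ^ (k - 1)) (hm : 2 ≤ m)
    (x : ℝ) (hx1 : (n : ℝ) / 2 ^ (k - 1) ≤ x) (hx2 : x ≤ 1) :
    ∫ τ in (0 : ℝ)..x,
        (if ((n : ℝ) - 1) / 2 ^ (k - 1) ≤ τ ∧ τ < (n : ℝ) / 2 ^ (k - 1) then
          chebGamma m * (2 : ℝ) ^ (((k : ℝ) - 1) / 2) *
            (Polynomial.Chebyshev.T ℝ (m : ℤ)).eval ((2 : ℝ) ^ k * τ - 2 * n + 1)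
        else 0)
      = chebGamma m * (2 : ℝ) ^ (-((k : ℝ) - 1) / 2 - 2) *
          ((1 - (-1 : ℝ) ^ (m + 1)) / ((m : ℝ) + 1) - (1 - (-1 : ℝ) ^ (m - 1)) / ((m : ℝ) - 1)) :=
  chebyshev_wavelet_first_integral_tail_general k n m hk hn1 hm x hx1
end

section
/- Let k be a positive integer and n ∈ {1,…,2^{k−1}}. For every x with (n−1)/2^{k−1} ≤ x ≤ n/2^{k−1}, writing θ = 2^k x − 2n + 1, the first integral of the degree-one Chebyshev wavelet satisfies ∫₀^x φ_{n1}(τ) dτ = γ_1 2^{−(k−1)/2 − 3} [ T_2(θ) − T_0(θ) ]; moreover for every x with n/2^{k−1} ≤ x ≤ 1 one has ∫₀^x φ_{n1}(τ) dτ = 0. -/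
open Real intervalIntegral

open Polynomial Polynomial.Chebyshev Set MeasureTheory

theorem intervalIntegral.integral_ite_mem_Ico_of_le {E : Type*} [NormedAddCommGroup E]
    [NormedSpace ℝ E] {f : ℝ → E} {s a b x : ℝ} (hsa : s ≤ a) (hax : a ≤ x) (hab : a ≤ b) :
    ∫ τ in s..x, (if a ≤ τ ∧ τ < b then f τ else 0) = ∫ τ in a..min x b, f τ := by
  simp only [← mem_Ico, ← indicator_apply]
  have hIco : (Ico a b).indicator f =ᵐ[volume] (Ioc a b).indicator f :=
    indicator_ae_eq_of_ae_eq_set Ico_ae_eq_Ioc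
  rw [integral_congr_ae (hIco.mono fun τ h _ => h), integral_of_le (hsa.trans hax),
    MeasureTheory.integral_indicator measurableSet_Ioc, Measure.restrict_restrict measurableSet_Ioc,
    Ioc_inter_Ioc, max_eq_left hsa, min_comm, integral_of_le (le_min hax hab)]

theorem integral_neg_one_chebyshev_T_one (θ : ℝ) :
    ∫ t in (-1)..θ, (T ℝ 1).eval t = ((T ℝ 2).eval θ - (T ℝ 0).eval θ) / 4 := by
  simp only [T_one, T_two, T_zero, eval_X, eval_sub, eval_mul, eval_pow, eval_ofNat, eval_one,
    integral_id]
  ring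

theorem integral_chebyshev_T_one_comp_mul_add {c d u : ℝ} (hc : c ≠ 0) (hu : c * u + d = -1)
    (y : ℝ) :
    ∫ τ in u..y, (T ℝ 1).eval (c * τ + d) =
      ((T ℝ 2).eval (c * y + d) - (T ℝ 0).eval (c * y + d)) / (4 * c) := by
  rw [intervalIntegral.integral_comp_mul_add (fun t => (T ℝ 1).eval t) hc, hu,
    integral_neg_one_chebyshev_T_one, smul_eq_mul]
  field_simp

theorem chebyshev_wavelet_first_integral_deg_one_general
    (k n : ℕ) (hk : 0 < k) (hn1 : 1 ≤ n) :
    (∀ x : ℝ, ((n : ℝ) - 1) / 2 ^ (k - 1) ≤ x → x ≤ (n : ℝ) / 2 ^ (k - 1) →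
      ∫ τ in (0 : ℝ)..x,
          (if ((n : ℝ) - 1) / 2 ^ (k - 1) ≤ τ ∧ τ < (n : ℝ) / 2 ^ (k - 1) then
            chebGamma 1 * (2 : ℝ) ^ (((k : ℝ) - 1) / 2) *
              (Polynomial.Chebyshev.T ℝ 1).eval ((2 : ℝ) ^ k * τ - 2 * n + 1)
          else 0)
        = chebGamma 1 * (2 : ℝ) ^ (-((k : ℝ) - 1) / 2 - 3) *
            ((Polynomial.Chebyshev.T ℝ 2).eval ((2 : ℝ) ^ k * x - 2 * n + 1)
              - (Polynomial.Chebyshev.T ℝ 0).eval ((2 : ℝ) ^ k * x - 2 * n + 1))) ∧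
    (∀ x : ℝ, (n : ℝ) / 2 ^ (k - 1) ≤ x → x ≤ 1 →
      ∫ τ in (0 : ℝ)..x,
          (if ((n : ℝ) - 1) / 2 ^ (k - 1) ≤ τ ∧ τ < (n : ℝ) / 2 ^ (k - 1) then
            chebGamma 1 * (2 : ℝ) ^ (((k : ℝ) - 1) / 2) *
              (Polynomial.Chebyshev.T ℝ 1).eval ((2 : ℝ) ^ k * τ - 2 * n + 1)
          else 0)
        = 0) := by
  set A : ℝ := ((n : ℝ) - 1) / 2 ^ (k - 1)
  set B : ℝ := (n : ℝ) / 2 ^ (k - 1)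
  have h2k : (2 : ℝ) ^ k = 2 * 2 ^ (k - 1) := by rw [← pow_succ']; congr; omega
  have hA : 0 ≤ A := div_nonneg (by simp [hn1]) (by positivity)
  have hAB : A ≤ B := div_le_div_of_nonneg_right (by linarith) (by positivity)
  have hθA : (2 : ℝ) ^ k * A + (1 - 2 * n) = -1 := by
    simp only [A, h2k]; field_simp; ring
  have hθB : (2 : ℝ) ^ k * B - 2 * n + 1 = 1 := by
    simp only [B, h2k]; field_simp; ring
  have hscale : (2 : ℝ) ^ (((k : ℝ) - 1) / 2) / (4 * 2 ^ k) = 2 ^ (-((k : ℝ) - 1) / 2 - 3) := by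
    rw [← Real.rpow_natCast, show (4 : ℝ) = 2 ^ (2 : ℝ) by norm_num, ← Real.rpow_add two_pos,
      ← Real.rpow_sub two_pos]
    ring_nf
  have hprim : ∀ y, ∫ τ in A..y, chebGamma 1 * (2 : ℝ) ^ (((k : ℝ) - 1) / 2) *
        (T ℝ 1).eval ((2 : ℝ) ^ k * τ - 2 * n + 1) =
      chebGamma 1 * (2 : ℝ) ^ (-((k : ℝ) - 1) / 2 - 3) *
        ((T ℝ 2).eval ((2 : ℝ) ^ k * y - 2 * n + 1) -
          (T ℝ 0).eval ((2 : ℝ) ^ k * y - 2 * n + 1)) := by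
    intro y
    simp only [sub_add_eq_add_sub, add_sub_assoc]
    rw [intervalIntegral.integral_const_mul,
      integral_chebyshev_T_one_comp_mul_add (by positivity) hθA, ← hscale]
    ring
  refine ⟨fun x hAx hxB => ?_, fun x hBx _ => ?_⟩
  · rw [intervalIntegral.integral_ite_mem_Ico_of_le hA hAx hAB, min_eq_left hxB, hprim]
  · rw [intervalIntegral.integral_ite_mem_Ico_of_le hA (hAB.trans hBx) hAB, min_eq_right hBx,
      hprim, hθB]
    norm_num [T_two]

/-- **First integral of the degree-one Chebyshev wavelet (Eq. (2.13)).**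
On the support interval, with `θ = 2^k x − 2n + 1`,
`∫₀^x φ_{n1}(τ) dτ = γ_1 2^{−(k−1)/2−3} [T_2(θ) − T_0(θ)]`, and for
`n/2^{k−1} ≤ x ≤ 1` one has `∫₀^x φ_{n1}(τ) dτ = 0`. -/
theorem chebyshev_wavelet_first_integral_deg_one
    (k n : ℕ) (hk : 0 < k) (hn1 : 1 ≤ n) (hn2 : n ≤ 2 ^ (k - 1)) :
    (∀ x : ℝ, ((n : ℝ) - 1) / 2 ^ (k - 1) ≤ x → x ≤ (n : ℝ) / 2 ^ (k - 1) →
      ∫ τ in (0 : ℝ)..x,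
          (if ((n : ℝ) - 1) / 2 ^ (k - 1) ≤ τ ∧ τ < (n : ℝ) / 2 ^ (k - 1) then
            chebGamma 1 * (2 : ℝ) ^ (((k : ℝ) - 1) / 2) *
              (Polynomial.Chebyshev.T ℝ 1).eval ((2 : ℝ) ^ k * τ - 2 * n + 1)
          else 0)
        = chebGamma 1 * (2 : ℝ) ^ (-((k : ℝ) - 1) / 2 - 3) *
            ((Polynomial.Chebyshev.T ℝ 2).eval ((2 : ℝ) ^ k * x - 2 * n + 1)
              - (Polynomial.Chebyshev.T ℝ 0).eval ((2 : ℝ) ^ k * x - 2 * n + 1))) ∧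
    (∀ x : ℝ, (n : ℝ) / 2 ^ (k - 1) ≤ x → x ≤ 1 →
      ∫ τ in (0 : ℝ)..x,
          (if ((n : ℝ) - 1) / 2 ^ (k - 1) ≤ τ ∧ τ < (n : ℝ) / 2 ^ (k - 1) then
            chebGamma 1 * (2 : ℝ) ^ (((k : ℝ) - 1) / 2) *
              (Polynomial.Chebyshev.T ℝ 1).eval ((2 : ℝ) ^ k * τ - 2 * n + 1)
          else 0)
        = 0) :=
  chebyshev_wavelet_first_integral_deg_one_general k n hk hn1
end

section
/- Let k be a positive integer and n ∈ {1,…,2^{k−1}}. For every x with (n−1)/2^{k−1} ≤ x ≤ n/2^{k−1}, writing θ = 2^k x − 2n + 1, the second integral of the degree-zero Chebyshev wavelet satisfies ∫₀^x ∫₀^u φ_{n0}(τ) dτ du = γ_0 2^{−3(k−1)/2 − 4} [ T_2(θ) + 4 T_1(θ) + 3 T_0(θ) ]. -/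
open Real intervalIntegral

/-!
On its support `[a, b)` the wavelet `φ_{n0}` is a constant `c`. Checking one-sided derivatives
(so that the fundamental theorem of calculus passes over the jump at `a`), its integral from `0` is
the ramp `c (u - a)⁺` on `[0, b]`, and the integral of the ramp is `c ((x - a)⁺)² / 2`. On the other
side, `T₂ + 4 T₁ + 3 T₀ = 2 (X + 1)²` and `θ + 1 = 2^k (x - a)`, so both sides are multiples of
`(x - a)²` and only the powers of two remain to be compared.
-/

open MeasureTheory Set

theorem Polynomial.Chebyshev.T_two_add_four_mul_T_one_add_three_mul_T_zero
    (R : Type*) [CommRing R] :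
    T R 2 + 4 * T R 1 + 3 * T R 0 = 2 * (Polynomial.X + 1) ^ 2 := by
  simp only [T_two, T_one, T_zero]
  ring

section Ramp

variable {a b c : ℝ}

theorem hasDerivWithinAt_Ioi_max_sub_zero (u : ℝ) :
    HasDerivWithinAt (fun v => max (v - a) 0) (if a ≤ u then 1 else 0) (Ioi u) u := by
  split_ifs with hau
  · refine ((hasDerivAt_id u).sub_const a).hasDerivWithinAt.congr (fun v hv => ?_) ?_
    · exact max_eq_left (by simp only [mem_Ioi] at hv; linarith)
    · exact max_eq_left (by simpa using hau)
  · refine ((hasDerivAt_const u (0 : ℝ)).congr_of_eventuallyEq ?_).hasDerivWithinAt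
    filter_upwards [Iio_mem_nhds (not_le.mp hau)] with v hv
    exact max_eq_right (by simp only [mem_Iio] at hv; linarith)

theorem hasDerivWithinAt_Ioi_max_sub_zero_sq_div_two (u : ℝ) :
    HasDerivWithinAt (fun v => max (v - a) 0 ^ 2 / 2) (max (u - a) 0) (Ioi u) u := by
  refine (((hasDerivWithinAt_Ioi_max_sub_zero (a := a) u).fun_pow 2).div_const 2).congr_deriv ?_
  split_ifs with hau
  · ring
  · simp [max_eq_right (by linarith : u - a ≤ 0)]

theorem intervalIntegrable_ite_Ico (p q : ℝ) :
    IntervalIntegrable (fun τ => if a ≤ τ ∧ τ < b then c else 0) volume p q := by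
  have hind : (fun τ => if a ≤ τ ∧ τ < b then c else 0) = (Ico a b).indicator fun _ => c := by
    ext τ; simp [indicator_apply]
  rw [hind, intervalIntegrable_iff]
  exact (intervalIntegrable_const (c := c)).def'.indicator measurableSet_Ico

theorem integral_zero_ite_Ico_eq_mul_max_sub (ha : 0 ≤ a) (hb : 0 ≤ b) {u : ℝ} (hub : u ≤ b) :
    ∫ τ in (0 : ℝ)..u, (if a ≤ τ ∧ τ < b then c else 0) = c * max (u - a) 0 := by
  have hderiv : ∀ τ ∈ Ioo (min 0 u) (max 0 u), HasDerivWithinAt (fun v => c * max (v - a) 0)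
      (if a ≤ τ ∧ τ < b then c else 0) (Ioi τ) τ := by
    intro τ hτ
    have hτb : τ < b := hτ.2.trans_le (max_le hb hub)
    refine ((hasDerivWithinAt_Ioi_max_sub_zero (a := a) τ).const_mul c).congr_deriv ?_
    simp [hτb]
  rw [integral_eq_sub_of_hasDeriv_right (by fun_prop) hderiv (intervalIntegrable_ite_Ico 0 u)]
  simp [ha]

theorem integral_zero_mul_max_sub_eq (ha : 0 ≤ a) (x : ℝ) :
    ∫ u in (0 : ℝ)..x, c * max (u - a) 0 = c * (max (x - a) 0 ^ 2 / 2) := by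
  rw [integral_eq_sub_of_hasDeriv_right (by fun_prop)
    (fun u _ => (hasDerivWithinAt_Ioi_max_sub_zero_sq_div_two u).const_mul c)
    (by apply Continuous.intervalIntegrable; fun_prop)]
  simp [ha]

end Ramp

theorem two_rpow_div_two_eq (s : ℝ) :
    (2 : ℝ) ^ (s / 2) = 2 ^ (-3 * s / 2 - 4) * (2 ^ (s + 1)) ^ 2 * 4 := by
  rw [← rpow_natCast (2 ^ (s + 1)) 2, ← rpow_mul zero_le_two, show (4 : ℝ) = 2 ^ (2 : ℝ) by norm_num,
    ← rpow_add two_pos, ← rpow_add two_pos]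
  congr 1
  push_cast
  ring

theorem chebyshev_wavelet_second_integral_deg_zero_general
    (k n : ℕ) (hk : 0 < k) (hn1 : 1 ≤ n)
    (x : ℝ) (hx1 : ((n : ℝ) - 1) / 2 ^ (k - 1) ≤ x) (hx2 : x ≤ (n : ℝ) / 2 ^ (k - 1)) :
    ∫ u in (0 : ℝ)..x, ∫ τ in (0 : ℝ)..u,
        (if ((n : ℝ) - 1) / 2 ^ (k - 1) ≤ τ ∧ τ < (n : ℝ) / 2 ^ (k - 1) then
          chebGamma 0 * (2 : ℝ) ^ (((k : ℝ) - 1) / 2) *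
            (Polynomial.Chebyshev.T ℝ 0).eval ((2 : ℝ) ^ k * τ - 2 * n + 1)
        else 0)
      = chebGamma 0 * (2 : ℝ) ^ (-3 * ((k : ℝ) - 1) / 2 - 4) *
          ((Polynomial.Chebyshev.T ℝ 2).eval ((2 : ℝ) ^ k * x - 2 * n + 1)
            + 4 * (Polynomial.Chebyshev.T ℝ 1).eval ((2 : ℝ) ^ k * x - 2 * n + 1)
            + 3 * (Polynomial.Chebyshev.T ℝ 0).eval ((2 : ℝ) ^ k * x - 2 * n + 1)) := by
  set a : ℝ := ((n : ℝ) - 1) / 2 ^ (k - 1)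
  set θ : ℝ := (2 : ℝ) ^ k * x - 2 * n + 1
  have ha : 0 ≤ a := div_nonneg (by simpa using hn1) (by positivity)
  have hx : 0 ≤ x := ha.trans hx1
  have hθ : θ + 1 = 2 ^ k * (x - a) := by
    simp only [θ, a]
    rw [show (2 : ℝ) ^ k = 2 * 2 ^ (k - 1) by rw [← pow_succ', Nat.sub_add_cancel hk]]
    field_simp
    ring
  have hsum : (Polynomial.Chebyshev.T ℝ 2).eval θ + 4 * (Polynomial.Chebyshev.T ℝ 1).eval θ
      + 3 * (Polynomial.Chebyshev.T ℝ 0).eval θ = 2 * (θ + 1) ^ 2 := by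
    simpa using congrArg (Polynomial.eval θ)
      (Polynomial.Chebyshev.T_two_add_four_mul_T_one_add_three_mul_T_zero ℝ)
  rw [hsum]
  simp only [Polynomial.Chebyshev.T_zero, Polynomial.eval_one, mul_one]
  rw [integral_congr fun u hu => integral_zero_ite_Ico_eq_mul_max_sub ha (by positivity)
      (((uIcc_of_le hx ▸ hu).2).trans hx2),
    integral_zero_mul_max_sub_eq ha, max_eq_left (sub_nonneg.2 hx1), hθ]
  have hrpow := two_rpow_div_two_eq ((k : ℝ) - 1)
  rw [sub_add_cancel, rpow_natCast] at hrpow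
  rw [hrpow]
  ring

/-- **Second integral of the degree-zero Chebyshev wavelet, middle case (Eq. (2.15)).**
For `x` in the support interval, with `θ = 2^k x − 2n + 1`,
`∫₀^x ∫₀^u φ_{n0}(τ) dτ du = γ_0 2^{−3(k−1)/2−4} [T_2(θ) + 4T_1(θ) + 3T_0(θ)]`. -/
theorem chebyshev_wavelet_second_integral_deg_zero
    (k n : ℕ) (hk : 0 < k) (hn1 : 1 ≤ n) (hn2 : n ≤ 2 ^ (k - 1))
    (x : ℝ) (hx1 : ((n : ℝ) - 1) / 2 ^ (k - 1) ≤ x) (hx2 : x ≤ (n : ℝ) / 2 ^ (k - 1)) :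
    ∫ u in (0 : ℝ)..x, ∫ τ in (0 : ℝ)..u,
        (if ((n : ℝ) - 1) / 2 ^ (k - 1) ≤ τ ∧ τ < (n : ℝ) / 2 ^ (k - 1) then
          chebGamma 0 * (2 : ℝ) ^ (((k : ℝ) - 1) / 2) *
            (Polynomial.Chebyshev.T ℝ 0).eval ((2 : ℝ) ^ k * τ - 2 * n + 1)
        else 0)
      = chebGamma 0 * (2 : ℝ) ^ (-3 * ((k : ℝ) - 1) / 2 - 4) *
          ((Polynomial.Chebyshev.T ℝ 2).eval ((2 : ℝ) ^ k * x - 2 * n + 1)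
            + 4 * (Polynomial.Chebyshev.T ℝ 1).eval ((2 : ℝ) ^ k * x - 2 * n + 1)
            + 3 * (Polynomial.Chebyshev.T ℝ 0).eval ((2 : ℝ) ^ k * x - 2 * n + 1)) :=
  chebyshev_wavelet_second_integral_deg_zero_general k n hk hn1 x hx1 hx2
end
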